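/- arXiv:2007.01494 — 2 statements merged into one kernel-verified Lean document; each statement's English description precedes it below -/
import Mathlib

section
/- Let x_1, ..., x_N be vectors in R^D with sum zero, and let I be a subset of {1,...,N} of cardinality b drawn uniformly at random without replacement. Then E[‖(1/b) Σ_{i∈I} x_i‖²] ≤ (1/(Nb)) · ((N-b)/(N-1)) · Σ_{i=1}^N ‖x_i‖². -/
/-!
Expanding the square, `∑_I ‖∑_{i ∈ I} x i‖² = ∑_{i,j} #{I ∋ i, j} ⟪x i, x j⟫`. The number of
`b`-subsets containing `i` is `a = b C(N,b) / N`, and the number containing two distinct points is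
`c = (b - 1) a / (N - 1)`. Hence the sum equals `c ‖∑ x i‖² + (a - c) ∑ ‖x i‖² = (a - c) ∑ ‖x i‖²`,
and dividing by `b² C(N,b)` gives the bound, with equality.
-/

open Finset

section Counting

variable {α : Type*} [DecidableEq α]

theorem card_mul_card_filter_mem_powersetCard {u : Finset α} {i : α} (hi : i ∈ u) (k : ℕ) :
    #u * #{t ∈ u.powersetCard k | i ∈ t} = k * (#u).choose k := by
  rcases k with _ | m
  · simp
  have hcount : #{t ∈ u.powersetCard (m + 1) | i ∈ t} = (#u - 1).choose m := by
    simpa [singleton_subset_iff] using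
      card_filter_powersetCard_subset {i} u (m + 1) (singleton_subset_iff.2 hi) (by simp)
  obtain ⟨n, hn⟩ : ∃ n, #u = n + 1 := Nat.exists_eq_succ_of_ne_zero (card_ne_zero_of_mem hi)
  rw [hcount, hn, Nat.add_sub_cancel, Nat.add_one_mul_choose_eq, mul_comm]

theorem sub_one_mul_card_filter_pair_mem_powersetCard {u : Finset α} {i j : α} (hi : i ∈ u)
    (hj : j ∈ u) (hij : i ≠ j) (k : ℕ) :
    (#u - 1) * #{t ∈ u.powersetCard k | i ∈ t ∧ j ∈ t}
      = (k - 1) * #{t ∈ u.powersetCard k | i ∈ t} := by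
  have hpair : ∀ t : Finset α, (i ∈ t ∧ j ∈ t) ↔ {i, j} ⊆ t := by simp [insert_subset_iff]
  have hpair_sub : ({i, j} : Finset α) ⊆ u := by simp [insert_subset_iff, hi, hj]
  rcases Nat.lt_or_ge k 2 with hk | hk
  · have hempty : #{t ∈ u.powersetCard k | i ∈ t ∧ j ∈ t} = 0 := by
      rw [card_eq_zero, filter_eq_empty_iff]
      intro t ht hijt
      have := card_le_card ((hpair t).1 hijt)
      rw [card_pair hij, (mem_powersetCard.1 ht).2] at this
      omega
    rw [hempty, show k - 1 = 0 by omega, mul_zero, zero_mul]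
  obtain ⟨m, rfl⟩ := Nat.exists_eq_add_of_le' hk
  have hcount_pair : #{t ∈ u.powersetCard (m + 2) | i ∈ t ∧ j ∈ t} = (#u - 2).choose m := by
    simpa [hpair, card_pair hij] using
      card_filter_powersetCard_subset {i, j} u (m + 2) hpair_sub (by simp [card_pair hij])
  have hcount : #{t ∈ u.powersetCard (m + 2) | i ∈ t} = (#u - 1).choose (m + 1) := by
    simpa [singleton_subset_iff] using
      card_filter_powersetCard_subset {i} u (m + 2) (singleton_subset_iff.2 hi) (by simp)
  obtain ⟨n, hn⟩ : ∃ n, #u = n + 2 := by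
    have := card_le_card hpair_sub
    rw [card_pair hij] at this
    exact ⟨#u - 2, by omega⟩
  rw [hcount_pair, hcount, hn, Nat.add_sub_cancel, show n + 2 - 1 = n + 1 by omega,
    Nat.add_one_mul_choose_eq, mul_comm]
  rfl

theorem sum_sum_sum_mem_eq_sum_card_smul {M : Type*} [AddCommMonoid M] [Fintype α]
    (P : Finset (Finset α)) (g : α → α → M) :
    ∑ t ∈ P, ∑ i ∈ t, ∑ j ∈ t, g i j = ∑ i, ∑ j, #{t ∈ P | i ∈ t ∧ j ∈ t} • g i j := by
  have hindicator : ∀ t : Finset α,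
      ∑ i ∈ t, ∑ j ∈ t, g i j = ∑ i, ∑ j, if i ∈ t ∧ j ∈ t then g i j else 0 := by
    intro t
    simp only [ite_and, sum_ite_irrel, sum_const_zero, ← sum_filter, filter_mem_eq_inter,
      univ_inter]
  simp_rw [hindicator]
  rw [sum_comm]
  refine sum_congr rfl fun i _ => ?_
  rw [sum_comm]
  refine sum_congr rfl fun j _ => ?_
  rw [← sum_filter, sum_const]

end Counting

theorem sum_norm_sum_sq_eq_of_card_filter_mem {α E : Type*} [Fintype α] [DecidableEq α]
    [NormedAddCommGroup E] [InnerProductSpace ℝ E] {P : Finset (Finset α)} {x : α → E}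
    (hx : ∑ i, x i = 0) {a c : ℝ} (ha : ∀ i, (#{t ∈ P | i ∈ t} : ℝ) = a)
    (hc : ∀ i j, i ≠ j → (#{t ∈ P | i ∈ t ∧ j ∈ t} : ℝ) = c) :
    ∑ t ∈ P, ‖∑ i ∈ t, x i‖ ^ 2 = (a - c) * ∑ i, ‖x i‖ ^ 2 := by
  have hcount : ∀ i j, (#{t ∈ P | i ∈ t ∧ j ∈ t} : ℝ) = c + if i = j then a - c else 0 := by
    intro i j
    split_ifs with hij
    · subst hij
      simp only [and_self, ha]
      ring
    · simpa using hc i j hij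
  have hgram : ∑ i, ∑ j, inner ℝ (x i) (x j) = 0 := by
    simp only [← inner_sum, hx, inner_zero_right, sum_const_zero]
  calc ∑ t ∈ P, ‖∑ i ∈ t, x i‖ ^ 2 = ∑ t ∈ P, ∑ i ∈ t, ∑ j ∈ t, inner ℝ (x i) (x j) := by
        simp only [← real_inner_self_eq_norm_sq, sum_inner]
        simp only [inner_sum]
    _ = ∑ i, ∑ j, (#{t ∈ P | i ∈ t ∧ j ∈ t} : ℝ) * inner ℝ (x i) (x j) := by
        simp only [sum_sum_sum_mem_eq_sum_card_smul, nsmul_eq_mul]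
    _ = c * ∑ i, ∑ j, inner ℝ (x i) (x j) + (a - c) * ∑ i, ‖x i‖ ^ 2 := by
        simp only [hcount, add_mul, sum_add_distrib, ite_mul, zero_mul, sum_ite_eq, mem_univ,
          if_true, mul_sum, real_inner_self_eq_norm_sq]
    _ = (a - c) * ∑ i, ‖x i‖ ^ 2 := by rw [hgram, mul_zero, zero_add]

/-- Variance bound for sampling without replacement: if `x 1, ..., x N` are vectors in `ℝ^D`
summing to zero and `I` is a uniformly random subset of `{1,...,N}` of cardinality `b`, then
`E ‖(1/b) ∑_{i ∈ I} x i‖² ≤ (1/(N b)) ((N-b)/(N-1)) ∑ i ‖x i‖²`. -/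
theorem without_replacement_variance_bound (N D b : ℕ) (hb : 0 < b) (hbN : b ≤ N) (hN : 2 ≤ N)
    (x : Fin N → EuclideanSpace ℝ (Fin D)) (hsum : ∑ i, x i = 0) :
    (1 / ((Finset.univ.powersetCard b : Finset (Finset (Fin N))).card : ℝ)) *
        ∑ I ∈ (Finset.univ.powersetCard b : Finset (Finset (Fin N))),
          ‖(1 / (b : ℝ)) • ∑ i ∈ I, x i‖ ^ 2
      ≤ (1 / ((N : ℝ) * b)) * (((N : ℝ) - b) / ((N : ℝ) - 1)) * ∑ i, ‖x i‖ ^ 2 := by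
  have hC : (#(univ.powersetCard b : Finset (Finset (Fin N))) : ℝ) = N.choose b := by simp
  have hC0 : (N.choose b : ℝ) ≠ 0 := by exact_mod_cast (Nat.choose_pos hbN).ne'
  have hN0 : (N : ℝ) ≠ 0 := by positivity
  have hN1 : (N : ℝ) - 1 ≠ 0 := by
    have : (2 : ℝ) ≤ N := by exact_mod_cast hN
    linarith
  have hsingle : ∀ i : Fin N,
      (#{t ∈ univ.powersetCard b | i ∈ t} : ℝ) = b * N.choose b / N := by
    intro i
    have h := card_mul_card_filter_mem_powersetCard (mem_univ i) b
    rw [card_univ, Fintype.card_fin] at h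
    rw [eq_div_iff hN0, mul_comm]
    exact_mod_cast h
  have hpair : ∀ i j : Fin N, i ≠ j → (#{t ∈ univ.powersetCard b | i ∈ t ∧ j ∈ t} : ℝ)
      = (b - 1) * (b * N.choose b / N) / (N - 1) := by
    intro i j hij
    have h := congrArg (Nat.cast : ℕ → ℝ)
      (sub_one_mul_card_filter_pair_mem_powersetCard (mem_univ i) (mem_univ j) hij b)
    rw [card_univ, Fintype.card_fin] at h
    push_cast [Nat.cast_sub (by omega : 1 ≤ N), Nat.cast_sub hb] at h
    rw [← hsingle i, eq_div_iff hN1, mul_comm, h]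
  apply le_of_eq
  simp_rw [hC, norm_smul, mul_pow, Real.norm_eq_abs, sq_abs, ← mul_sum,
    sum_norm_sum_sq_eq_of_card_filter_mem hsum hsingle hpair]
  field_simp
  ring
end

section
/- Let f : R^n → R be L-smooth with f bounded below by f*, let G > 0 bound the stochastic gradient norms, and consider SGD with constant step size η = sqrt(2Δ/(L G² T)) where Δ = f(x_0) - f*. If at each step E[g_t | x_t] = ∇f(x_t) and ‖g_t‖ ≤ G almost surely, then (1/T) Σ_{t=0}^{T-1} E‖∇f(x_t)‖² ≤ sqrt(2 L G² Δ / T). -/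
/-! Along every sample path, `L`-smoothness gives
`f (x_{t+1}) ≤ f (x_t) - η ⟪∇f (x_t), g_t⟫ + L η² G² / 2`; telescoping and `f ≥ f*` bound
`η ∑ ⟪∇f (x_t), g_t⟫` by `Δ + L η² G² T / 2`. Since `∇f (x_t)` is `σ(x_t)`-measurable and
`E[g_t | x_t] = ∇f (x_t)`, each `E ⟪∇f (x_t), g_t⟫` equals `E ‖∇f (x_t)‖²`, and the step size
balances the two terms of the bound. -/

open MeasureTheory Finset
open scoped RealInnerProductSpace

section Smooth

variable {E : Type*} [NormedAddCommGroup E] [InnerProductSpace ℝ E] [CompleteSpace E]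
  {f : E → ℝ} {gradf : E → E} {L : ℝ}

/- Along the segment, `s ↦ f (x + s • d) - s ⟪∇f x, d⟫ - L s² ‖d‖² / 2` has derivative
`⟪∇f (x + s • d) - ∇f x, d⟫ - L s ‖d‖² ≤ 0` for `s ≥ 0`, by Cauchy–Schwarz and the Lipschitz
bound; so it is antitone on `[0, ∞)`. -/
theorem le_add_inner_add_sq_of_lipschitz_gradient
    (hgrad : ∀ x, HasGradientAt f (gradf x) x)
    (hlip : ∀ x y, ‖gradf x - gradf y‖ ≤ L * ‖x - y‖) (x y : E) :
    f y ≤ f x + ⟪gradf x, y - x⟫ + L / 2 * ‖y - x‖ ^ 2 := by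
  set d := y - x
  let φ : ℝ → ℝ := fun s => f (x + s • d) - s * ⟪gradf x, d⟫ - L / 2 * s ^ 2 * ‖d‖ ^ 2
  let φ' : ℝ → ℝ := fun s => ⟪gradf (x + s • d), d⟫ - ⟪gradf x, d⟫ - L * s * ‖d‖ ^ 2
  have hφ : ∀ s, HasDerivAt φ (φ' s) s := by
    intro s
    have hline : HasDerivAt (fun s : ℝ => x + s • d) d s := by
      simpa using ((hasDerivAt_id s).smul_const d).const_add x
    have hfs : HasDerivAt (fun s : ℝ => f (x + s • d)) ⟪gradf (x + s • d), d⟫ s := by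
      simpa [InnerProductSpace.toDual_apply_apply, Function.comp_def] using
        (hgrad (x + s • d)).hasFDerivAt.comp_hasDerivAt s hline
    refine ((hfs.sub ((hasDerivAt_id s).mul_const ⟪gradf x, d⟫)).sub
      (((hasDerivAt_pow 2 s).const_mul (L / 2)).mul_const (‖d‖ ^ 2))).congr_deriv ?_
    simp only [φ']
    ring
  have hφ'_nonpos : ∀ s, 0 ≤ s → φ' s ≤ 0 := by
    intro s hs
    have hstep : ‖gradf (x + s • d) - gradf x‖ ≤ L * (s * ‖d‖) := by
      simpa [norm_smul, abs_of_nonneg hs] using hlip (x + s • d) x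
    have : ⟪gradf (x + s • d) - gradf x, d⟫ ≤ L * (s * ‖d‖) * ‖d‖ :=
      (real_inner_le_norm _ _).trans (by gcongr)
    simp only [φ', ← inner_sub_left]
    linarith
  have hanti : AntitoneOn φ (Set.Ici 0) :=
    antitoneOn_of_hasDerivWithinAt_nonpos (convex_Ici 0)
      (fun s _ => (hφ s).continuousAt.continuousWithinAt) (fun s _ => (hφ s).hasDerivWithinAt)
      (fun s hs => hφ'_nonpos s (interior_subset hs))
  have h01 := hanti (Set.mem_Ici.2 le_rfl) (Set.mem_Ici.2 zero_le_one) zero_le_one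
  norm_num [φ, d] at h01
  linarith

theorem le_sub_inner_add_sq_of_lipschitz_gradient
    (hgrad : ∀ x, HasGradientAt f (gradf x) x)
    (hlip : ∀ x y, ‖gradf x - gradf y‖ ≤ L * ‖x - y‖) (x v : E) (η : ℝ) :
    f (x - η • v) ≤ f x - η * ⟪gradf x, v⟫ + L * η ^ 2 / 2 * ‖v‖ ^ 2 := by
  have h := le_add_inner_add_sq_of_lipschitz_gradient hgrad hlip x (x - η • v)
  rw [sub_sub_cancel_left, inner_neg_right, real_inner_smul_right, norm_neg, norm_smul,
    mul_pow, Real.norm_eq_abs, sq_abs] at h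
  linarith

variable {η : ℝ} {xs gs : ℕ → E}

theorem sgd_add_mul_sum_inner_le (hgrad : ∀ x, HasGradientAt f (gradf x) x)
    (hlip : ∀ x y, ‖gradf x - gradf y‖ ≤ L * ‖x - y‖)
    (hupdate : ∀ t, xs (t + 1) = xs t - η • gs t) (N : ℕ) :
    f (xs N) + η * ∑ t ∈ range N, ⟪gradf (xs t), gs t⟫ ≤
      f (xs 0) + L * η ^ 2 / 2 * ∑ t ∈ range N, ‖gs t‖ ^ 2 := by
  induction N with
  | zero => simp
  | succ N ih =>
    have hstep := le_sub_inner_add_sq_of_lipschitz_gradient hgrad hlip (xs N) (gs N) η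
    rw [← hupdate] at hstep
    simp only [sum_range_succ, mul_add]
    linarith

theorem sgd_mul_sum_inner_le (hgrad : ∀ x, HasGradientAt f (gradf x) x)
    (hlip : ∀ x y, ‖gradf x - gradf y‖ ≤ L * ‖x - y‖) (hL : 0 ≤ L) {fstar G : ℝ}
    (hbelow : ∀ x, fstar ≤ f x) (hupdate : ∀ t, xs (t + 1) = xs t - η • gs t)
    (hbound : ∀ t, ‖gs t‖ ≤ G) (T : ℕ) :
    η * ∑ t ∈ range T, ⟪gradf (xs t), gs t⟫ ≤ f (xs 0) - fstar + L * η ^ 2 / 2 * (T * G ^ 2) := by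
  have hsq : ∑ t ∈ range T, ‖gs t‖ ^ 2 ≤ T * G ^ 2 := by
    simpa using sum_le_sum fun t (_ : t ∈ range T) =>
      pow_le_pow_left₀ (norm_nonneg _) (hbound t) 2
  have := mul_le_mul_of_nonneg_left hsq (by positivity : 0 ≤ L * η ^ 2 / 2)
  linarith [sgd_add_mul_sum_inner_le hgrad hlip hupdate T, hbelow (xs T)]

end Smooth

section CondExp

variable {Ω E : Type*} {m m0 : MeasurableSpace Ω} {μ : Measure Ω} [IsFiniteMeasure μ]
  [NormedAddCommGroup E] [InnerProductSpace ℝ E] [CompleteSpace E] {g h : Ω → E} {C : ℝ}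

theorem integrable_inner_of_condExp_ae_eq (hcond : μ[g | m] =ᵐ[μ] h)
    (hg : ∀ᵐ ω ∂μ, ‖g ω‖ ≤ C) : Integrable (fun ω => ⟪h ω, g ω⟫) μ := by
  by_cases hgi : Integrable g μ
  · have hh : ∀ᵐ ω ∂μ, ‖h ω‖ ≤ C := by
      filter_upwards [hcond, ae_bdd_norm_condExp_of_ae_bdd_norm hg] with ω hω hbdd
      rwa [← hω]
    refine Integrable.mono' (integrable_const (C * C))
      ((integrable_condExp.aestronglyMeasurable.congr hcond).inner hgi.1) ?_
    filter_upwards [hh, hg] with ω hhω hgω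
    exact (norm_inner_le_norm _ _).trans
      (mul_le_mul hhω hgω (norm_nonneg _) ((norm_nonneg _).trans hhω))
  · refine (integrable_zero _ _ μ).congr ?_
    filter_upwards [hcond] with ω hω
    simp [← hω, condExp_of_not_integrable hgi]

/- Pull the `m`-measurable factor `μ[g | m]` out of `μ[⟪μ[g | m], g⟫ | m]`. -/
theorem integral_inner_of_condExp_ae_eq (hcond : μ[g | m] =ᵐ[μ] h)
    (hg : ∀ᵐ ω ∂μ, ‖g ω‖ ≤ C) : ∫ ω, ⟪h ω, g ω⟫ ∂μ = ∫ ω, ‖h ω‖ ^ 2 ∂μ := by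
  suffices ∫ ω, ⟪μ[g | m] ω, g ω⟫ ∂μ = ∫ ω, ‖μ[g | m] ω‖ ^ 2 ∂μ by
    have hinner : (fun ω => ⟪μ[g | m] ω, g ω⟫) =ᵐ[μ] fun ω => ⟪h ω, g ω⟫ := by
      filter_upwards [hcond] with ω hω
      rw [hω]
    have hsq : (fun ω => ‖μ[g | m] ω‖ ^ 2) =ᵐ[μ] fun ω => ‖h ω‖ ^ 2 := by
      filter_upwards [hcond] with ω hω
      rw [hω]
    rwa [integral_congr_ae hinner, integral_congr_ae hsq] at this
  by_cases hm : m ≤ m0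
  swap
  · simp [condExp_of_not_le hm]
  by_cases hgi : Integrable g μ
  swap
  · simp [condExp_of_not_integrable hgi]
  calc ∫ ω, ⟪μ[g | m] ω, g ω⟫ ∂μ = ∫ ω, μ[fun ω => ⟪μ[g | m] ω, g ω⟫ | m] ω ∂μ :=
        (integral_condExp hm).symm
    _ = ∫ ω, ⟪μ[g | m] ω, μ[g | m] ω⟫ ∂μ :=
        integral_congr_ae (condExp_bilin_of_stronglyMeasurable_left (innerSL ℝ)
          stronglyMeasurable_condExp (integrable_inner_of_condExp_ae_eq .rfl hg) hgi)
    _ = ∫ ω, ‖μ[g | m] ω‖ ^ 2 ∂μ := by simp_rw [real_inner_self_eq_norm_sq]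

end CondExp

/- `η` minimises `Δ / η + L G² T η / 2`, at which point both terms equal `Δ / η`. -/
theorem one_div_mul_le_sqrt_of_optimal_step {S Δ L G η T : ℝ} (hT : 0 < T) (hL : 0 < L)
    (hG : 0 < G) (hΔ : 0 < Δ) (hη : η = √(2 * Δ / (L * G ^ 2 * T)))
    (hS : η * S ≤ Δ + L * η ^ 2 / 2 * (T * G ^ 2)) :
    1 / T * S ≤ √(2 * L * G ^ 2 * Δ / T) := by
  have hηsq : η ^ 2 = 2 * Δ / (L * G ^ 2 * T) := by
    rw [hη, Real.sq_sqrt]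
    positivity
  have hηpos : 0 < η := hη ▸ Real.sqrt_pos.2 (by positivity)
  have hbalance : L * η ^ 2 / 2 * (T * G ^ 2) = Δ := by
    rw [hηsq]
    field_simp
  have hrate : 2 * Δ / (η * T) = √(2 * L * G ^ 2 * Δ / T) := by
    rw [← Real.sqrt_sq (by positivity : 0 ≤ 2 * Δ / (η * T))]
    congr 1
    rw [div_pow, mul_pow, mul_pow, hηsq]
    field_simp
  rw [← hrate, le_div_iff₀ (by positivity)]
  calc 1 / T * S * (η * T) = η * S := by field_simp
    _ ≤ 2 * Δ := by linarith

/-- SGD bound: for an `L`-smooth function bounded below by `f*`, with unbiased stochastic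
gradients of norm at most `G` and constant step size `η = √(2Δ/(LG²T))` where
`Δ = f(x₀) - f*`, one has `(1/T) ∑_{t<T} E‖∇f(x_t)‖² ≤ √(2LG²Δ/T)`. -/
theorem sgd_convergence_bound (n : ℕ)
    {Ω : Type*} [MeasurableSpace Ω] (μ : Measure Ω) [IsProbabilityMeasure μ]
    (f : EuclideanSpace ℝ (Fin n) → ℝ)
    (gradf : EuclideanSpace ℝ (Fin n) → EuclideanSpace ℝ (Fin n))
    (L G Δ fstar η : ℝ) (T : ℕ) (hT : 0 < T) (hL : 0 < L) (hG : 0 < G)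
    (hgrad : ∀ x, HasGradientAt f (gradf x) x)
    (hlip : ∀ x y, ‖gradf x - gradf y‖ ≤ L * ‖x - y‖)
    (hbelow : ∀ x, fstar ≤ f x)
    (x g : ℕ → Ω → EuclideanSpace ℝ (Fin n))
    (x₀ : EuclideanSpace ℝ (Fin n)) (hx₀ : ∀ ω, x 0 ω = x₀)
    (hΔ : Δ = f x₀ - fstar) (hΔpos : 0 < Δ)
    (hη : η = Real.sqrt (2 * Δ / (L * G ^ 2 * T)))
    (hupdate : ∀ t ω, x (t + 1) ω = x t ω - η • g t ω)
    (hunbiased : ∀ t,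
      μ[g t | MeasurableSpace.comap (x t)
          (inferInstance : MeasurableSpace (EuclideanSpace ℝ (Fin n)))]
        =ᵐ[μ] fun ω => gradf (x t ω))
    (hbound : ∀ t ω, ‖g t ω‖ ≤ G) :
    (1 / (T : ℝ)) * ∑ t ∈ Finset.range T, ∫ ω, ‖gradf (x t ω)‖ ^ 2 ∂μ ≤
      Real.sqrt (2 * L * G ^ 2 * Δ / T) := by
  have hinner : ∀ t, Integrable (fun ω => ⟪gradf (x t ω), g t ω⟫) μ := fun t =>
    integrable_inner_of_condExp_ae_eq (hunbiased t) (ae_of_all _ (hbound t))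
  have hpath : ∀ ω, η * ∑ t ∈ range T, ⟪gradf (x t ω), g t ω⟫ ≤
      Δ + L * η ^ 2 / 2 * (T * G ^ 2) := fun ω => by
    have := sgd_mul_sum_inner_le (xs := (x · ω)) hgrad hlip hL.le hbelow (hupdate · ω)
      (hbound · ω) T
    rwa [hx₀, ← hΔ] at this
  refine one_div_mul_le_sqrt_of_optimal_step (Nat.cast_pos.2 hT) hL hG hΔpos hη ?_
  calc η * ∑ t ∈ range T, ∫ ω, ‖gradf (x t ω)‖ ^ 2 ∂μ
      = ∫ ω, η * ∑ t ∈ range T, ⟪gradf (x t ω), g t ω⟫ ∂μ := by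
        rw [integral_const_mul, integral_finsetSum _ fun t _ => hinner t]
        simp_rw [integral_inner_of_condExp_ae_eq (hunbiased _) (ae_of_all _ (hbound _))]
    _ ≤ ∫ _, Δ + L * η ^ 2 / 2 * (T * G ^ 2) ∂μ :=
        integral_mono ((integrable_finsetSum _ fun t _ => hinner t).const_mul η)
          (integrable_const _) hpath
    _ = Δ + L * η ^ 2 / 2 * (T * G ^ 2) := by simp
end
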